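/- Let Λ be a lattice of rank n in E, let Λ' ⊆ Λ be a pure sublattice, and let π be the orthogonal projection of E onto the orthogonal complement of span(Λ'). Then the covering radius satisfies the subadditivity bound μ(Λ)² ≤ μ(π(Λ))² + μ(Λ')². -/

import Mathlib

open scoped RealInnerProductSpace
open Metric

noncomputable section

variable {E : Type*} [NormedAddCommGroup E] [InnerProductSpace ℝ E] [FiniteDimensional ℝ E]

/-- `L ⊆ E` is a lattice of rank `n`: it is generated (over `ℤ`) by `n`
`ℝ`-linearly independent vectors. -/
def IsLatticeOfRank (L : Submodule ℤ E) (n : ℕ) : Prop :=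
  ∃ b : Fin n → E, LinearIndependent ℝ b ∧ L = Submodule.span ℤ (Set.range b)

/-- The real span of a lattice. -/
def latSpan (L : Submodule ℤ E) : Submodule ℝ E := Submodule.span ℝ (L : Set E)

/-- The covering radius of a lattice, computed inside its real span. -/
def covRad (L : Submodule ℤ E) : ℝ :=
  ⨆ x : latSpan L, infDist (x : E) (L : Set E)

/-- `L'` is a pure sublattice of `L`: the quotient is torsion-free. -/
def IsPureIn (L' L : Submodule ℤ E) : Prop :=
  L' ≤ L ∧ ∀ v ∈ L, ∀ m : ℤ, m ≠ 0 → m • v ∈ L' → v ∈ L'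

/-- Orthogonal projection of `E` onto the orthogonal complement of the span
of `L'`, as a `ℤ`-linear endomorphism of `E`. -/
def projPerp (L' : Submodule ℤ E) : E →ₗ[ℤ] E :=
  ((latSpan L')ᗮ.subtype.comp (Submodule.orthogonalProjectionOnto (latSpan L')ᗮ).toLinearMap).restrictScalars ℤ

/-- The quotient lattice `L/L'`, realized as the image of `L` under the
orthogonal projection onto the orthogonal complement of the span of `L'`. -/
def quotLat (L L' : Submodule ℤ E) : Submodule ℤ E := L.map (projPerp L')

/-! For `x` in the span of `L`, first choose `y ∈ L` with `π y` close to `π x`, then `z ∈ L'`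
close to the component `P (x - y)` of `x - y` in `span L'`. The two components of `x - (y + z)`
along `span L'` and its orthogonal complement are `P (x - y) - z` and `π x - π y`, of lengths
about `μ(L')` and `μ(π L)`, and Pythagoras adds their squares. -/

lemma infDist_zspan_le_sum_norm {F ι : Type*} [NormedAddCommGroup F] [NormedSpace ℝ F]
    [Fintype ι] (v : ι → F) {x : F} (hx : x ∈ Submodule.span ℝ (Set.range v)) :
    infDist x (Submodule.span ℤ (Set.range v) : Set F) ≤ ∑ i, ‖v i‖ := by
  obtain ⟨c, rfl⟩ := (Submodule.mem_span_range_iff_exists_fun ℝ).1 hx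
  have hfloor : ∑ i, ⌊c i⌋ • v i ∈ Submodule.span ℤ (Set.range v) :=
    Submodule.sum_mem _ fun i _ => Submodule.smul_mem _ _ (Submodule.subset_span ⟨i, rfl⟩)
  calc infDist (∑ i, c i • v i) _ ≤ ‖∑ i, c i • v i - ∑ i, ⌊c i⌋ • v i‖ :=
        (infDist_le_dist_of_mem hfloor).trans_eq (dist_eq_norm _ _)
    _ = ‖∑ i, Int.fract (c i) • v i‖ := by
        rw [← Finset.sum_sub_distrib]
        congr 1
        refine Finset.sum_congr rfl fun i _ => ?_
        rw [← Int.cast_smul_eq_zsmul ℝ, ← sub_smul, Int.fract]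
    _ ≤ ∑ i, ‖Int.fract (c i) • v i‖ := norm_sum_le _ _
    _ ≤ ∑ i, ‖v i‖ := Finset.sum_le_sum fun i _ => by
        rw [norm_smul, Real.norm_of_nonneg (Int.fract_nonneg _)]
        exact mul_le_of_le_one_left (norm_nonneg _) (Int.fract_lt_one _).le

lemma le_infDist_sq_add {α : Type*} [PseudoMetricSpace α] {s : Set α} (hs : s.Nonempty)
    {p : α} {a c : ℝ} (h : ∀ y ∈ s, a ≤ dist p y ^ 2 + c) : a ≤ infDist p s ^ 2 + c := by
  by_contra! hlt
  obtain ⟨y, hy, hpy⟩ := (infDist_lt_iff hs).1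
    ((Real.lt_sqrt infDist_nonneg).2 (show infDist p s ^ 2 < a - c by linarith))
  linarith [h y hy, (Real.lt_sqrt dist_nonneg).1 hpy]

lemma Submodule.norm_sub_sq_eq_of_mem {F : Type*} [NormedAddCommGroup F] [InnerProductSpace ℝ F]
    (K : Submodule ℝ F) [K.HasOrthogonalProjection] (w : F) {z : F} (hz : z ∈ K) :
    ‖w - z‖ ^ 2 = ‖K.starProjection w - z‖ ^ 2 + ‖Kᗮ.starProjection w‖ ^ 2 := by
  have hz' : Kᗮ.starProjection z = 0 := by
    rw [starProjection_orthogonal_val, K.starProjection_eq_self_iff.2 hz, sub_self]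
  rw [K.norm_sq_eq_add_norm_sq_starProjection (w - z), map_sub, map_sub,
    K.starProjection_eq_self_iff.2 hz, hz', sub_zero]

omit [FiniteDimensional ℝ E] in
lemma IsLatticeOfRank.fg {L : Submodule ℤ E} {n : ℕ} (hL : IsLatticeOfRank L n) : L.FG := by
  obtain ⟨b, -, rfl⟩ := hL
  exact Submodule.fg_span (Set.finite_range b)

omit [FiniteDimensional ℝ E] in
lemma covRad_nonneg (M : Submodule ℤ E) : 0 ≤ covRad M :=
  Real.iSup_nonneg fun _ => infDist_nonneg

omit [FiniteDimensional ℝ E] in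
lemma infDist_le_covRad {M : Submodule ℤ E} (hM : M.FG) {x : E} (hx : x ∈ latSpan M) :
    infDist x (M : Set E) ≤ covRad M := by
  refine le_ciSup (f := fun x : latSpan M => infDist (x : E) (M : Set E)) ?_ ⟨x, hx⟩
  obtain ⟨k, v, rfl⟩ := Submodule.fg_iff_exists_fin_generating_family.1 hM
  refine ⟨∑ i, ‖v i‖, ?_⟩
  rintro _ ⟨y, rfl⟩
  refine infDist_zspan_le_sum_norm v ?_
  simpa only [latSpan, Submodule.span_span_of_tower] using y.2

omit [FiniteDimensional ℝ E] in
lemma covRad_sq_le {M : Submodule ℤ E} {r : ℝ} (h : ∀ x ∈ latSpan M, infDist x M ^ 2 ≤ r) :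
    covRad M ^ 2 ≤ r := by
  have hr : 0 ≤ r := (sq_nonneg _).trans (h 0 (latSpan M).zero_mem)
  refine (Real.le_sqrt (covRad_nonneg M) hr).1 (Real.iSup_le (fun x => ?_) (Real.sqrt_nonneg r))
  exact Real.le_sqrt_of_sq_le (h x x.2)

lemma projPerp_apply (L' : Submodule ℤ E) (x : E) :
    projPerp L' x = (latSpan L')ᗮ.starProjection x :=
  rfl

lemma projPerp_mem_latSpan_quotLat {L : Submodule ℤ E} (L' : Submodule ℤ E) {x : E}
    (hx : x ∈ latSpan L) : projPerp L' x ∈ latSpan (quotLat L L') := by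
  have hπ : (projPerp L' : E → E) = (latSpan L')ᗮ.starProjection := rfl
  rw [latSpan, quotLat, Submodule.map_coe, hπ, ← ContinuousLinearMap.coe_coe,
    Submodule.span_image]
  exact Submodule.mem_map_of_mem hx

lemma infDist_sq_le_covRad_sq_add {L L' : Submodule ℤ E} (hL : L.FG) (hL'L : L' ≤ L) {x : E}
    (hx : x ∈ latSpan L) :
    infDist x L ^ 2 ≤ covRad (quotLat L L') ^ 2 + covRad L' ^ 2 := by
  set K := latSpan L'
  have hlift : ∀ y ∈ L,
      infDist x L ^ 2 ≤ dist (projPerp L' x) (projPerp L' y) ^ 2 + covRad L' ^ 2 := by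
    intro y hy
    have hsplit : ∀ z ∈ L', infDist x L ^ 2 ≤
        dist (K.starProjection (x - y)) z ^ 2 + dist (projPerp L' x) (projPerp L' y) ^ 2 := by
      intro z hz
      have hyz : infDist x L ≤ ‖x - y - z‖ := by
        rw [sub_sub, ← dist_eq_norm]
        exact infDist_le_dist_of_mem (L.add_mem hy (hL'L hz))
      rw [dist_eq_norm, dist_eq_norm, projPerp_apply, projPerp_apply, ← map_sub,
        ← K.norm_sub_sq_eq_of_mem (x - y) (Submodule.subset_span hz)]
      exact pow_le_pow_left₀ infDist_nonneg hyz 2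
    rw [add_comm]
    calc infDist x L ^ 2
        ≤ infDist (K.starProjection (x - y)) L' ^ 2 + dist (projPerp L' x) (projPerp L' y) ^ 2 :=
          le_infDist_sq_add ⟨0, L'.zero_mem⟩ hsplit
      _ ≤ covRad L' ^ 2 + dist (projPerp L' x) (projPerp L' y) ^ 2 := by
          gcongr
          exacts [infDist_nonneg, infDist_le_covRad (hL.of_le hL'L) (K.starProjection_apply_mem _)]
  calc infDist x L ^ 2 ≤ infDist (projPerp L' x) (quotLat L L') ^ 2 + covRad L' ^ 2 := by
        refine le_infDist_sq_add ⟨0, Submodule.zero_mem _⟩ fun q hq => ?_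
        obtain ⟨y, hy, rfl⟩ := Submodule.mem_map.1 hq
        exact hlift y hy
    _ ≤ covRad (quotLat L L') ^ 2 + covRad L' ^ 2 := by
        gcongr
        exacts [infDist_nonneg, infDist_le_covRad (hL.map _) (projPerp_mem_latSpan_quotLat L' hx)]

/-- Let Λ be a lattice of rank n, Λ' ⊆ Λ a pure sublattice, and π
the orthogonal projection of E onto the orthogonal complement of span(Λ').
Then μ(Λ)² ≤ μ(π(Λ))² + μ(Λ')² (subadditivity of the covering radius). -/
theorem covRad_sq_subadditive
    {E : Type*} [NormedAddCommGroup E] [InnerProductSpace ℝ E] [FiniteDimensional ℝ E]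
    (n : ℕ) (L L' : Submodule ℤ E) (hL : IsLatticeOfRank L n) (hpure : IsPureIn L' L) :
    covRad L ^ 2 ≤ covRad (quotLat L L') ^ 2 + covRad L' ^ 2 :=
  covRad_sq_le fun _ hx => infDist_sq_le_covRad_sq_add hL.fg hpure.1 hx

end
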